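/- arXiv:2202.10955 — 5 statements merged into one kernel-verified Lean document; each statement's English description precedes it below -/
import Mathlib

section
/- Let Γ > 0 and δ² > 0 be real numbers, let M ≥ 1 be a natural number, and let V_1, …, V_M be real numbers satisfying the SIC feasibility conditions V_1 ≥ Γδ² and V_m ≥ Γ(∑_{x=1}^{m-1} V_x + δ²) for every 2 ≤ m ≤ M. Then V_m ≥ δ²·Γ·(1+Γ)^{m-1} for every 1 ≤ m ≤ M; that is, the geometric design δ²Γ(1+Γ)^{m-1} is the pointwise-minimal feasible power-level sequence. -/
/-- Any SIC-feasible power-level sequence dominates the geometric design pointwise: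
V_m ≥ δ²Γ(1+Γ)^{m-1} for every 1 ≤ m ≤ M. -/
theorem stmt_3 (Γ δ2 : ℝ) (hΓ : 0 < Γ) (hδ : 0 < δ2) (M : ℕ) (hM : 1 ≤ M) (V : ℕ → ℝ)
    (hV1 : V 1 ≥ Γ * δ2)
    (hVm : ∀ m : ℕ, 2 ≤ m → m ≤ M → V m ≥ Γ * ((∑ x ∈ Finset.Icc 1 (m - 1), V x) + δ2)) :
    ∀ m : ℕ, 1 ≤ m → m ≤ M → V m ≥ δ2 * Γ * (1 + Γ) ^ (m - 1) := by
  intro m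
  induction m using Nat.strong_induction_on with
  | _ m ih =>
    intro h1 hmM
    rcases eq_or_lt_of_le h1 with h | h2
    · simp [← h]; linarith
    · have h2 : 2 ≤ m := h2
      have key : V m ≥ Γ * ((∑ x ∈ Finset.Icc 1 (m - 1), V x) + δ2) := hVm m h2 hmM
      have hsum : (∑ x ∈ Finset.Icc 1 (m - 1), V x)
          ≥ ∑ x ∈ Finset.Icc 1 (m - 1), δ2 * Γ * (1 + Γ) ^ (x - 1) := by
        apply Finset.sum_le_sum
        intro x hx
        simp only [Finset.mem_Icc] at hx
        exact ih x (lt_of_le_of_lt hx.2 (by omega)) hx.1 (le_trans (le_trans hx.2 (by omega)) hmM)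
      have hgeom : ∑ x ∈ Finset.Icc 1 (m - 1), δ2 * Γ * (1 + Γ) ^ (x - 1)
          = δ2 * ((1 + Γ) ^ (m - 1) - 1) := by
        have : ∑ x ∈ Finset.Icc 1 (m - 1), δ2 * Γ * (1 + Γ) ^ (x - 1)
            = ∑ i ∈ Finset.range (m - 1), δ2 * Γ * (1 + Γ) ^ i := by
          rw [show Finset.Icc 1 (m-1) = Finset.Ico 1 m by rw [← Finset.Ico_add_one_right_eq_Icc]; congr 1; omega,
            Finset.sum_Ico_eq_sum_range]
          apply Finset.sum_congr rfl
          intro i _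
          norm_num
        rw [this, ← Finset.mul_sum]
        have hgm := geom_sum_mul (1 + Γ) (m - 1)
        have : (∑ i ∈ Finset.range (m - 1), (1 + Γ) ^ i) * Γ = (1 + Γ) ^ (m - 1) - 1 := by
          simpa using hgm
        nlinarith [this]
      rw [hgeom] at hsum
      have : Γ * ((∑ x ∈ Finset.Icc 1 (m - 1), V x) + δ2)
          ≥ Γ * (δ2 * ((1 + Γ) ^ (m - 1) - 1) + δ2) := by
        apply mul_le_mul_of_nonneg_left _ hΓ.le
        linarith
      calc V m ≥ Γ * (δ2 * ((1 + Γ) ^ (m - 1) - 1) + δ2) := le_trans this key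
        _ = δ2 * Γ * (1 + Γ) ^ (m - 1) := by ring
end

section
/- Let Γ > 0, δ² > 0, and V_max > 0 be real numbers, let M ≥ 1 be a natural number, and let V_1, …, V_M be real numbers satisfying V_1 ≥ Γδ², V_m ≥ Γ(∑_{x=1}^{m-1} V_x + δ²) for every 2 ≤ m ≤ M, and V_M ≤ V_max. Then (1+Γ)^{M-1} ≤ V_max/(δ²Γ), and consequently M ≤ ⌊ log(V_max/(δ²Γ)) / log(1+Γ) + 1 ⌋. -/
/-- Upper bound on the number of SIC-feasible power levels under a maximum received power:
(1+Γ)^{M-1} ≤ V_max/(δ²Γ), hence M ≤ ⌊log(V_max/(δ²Γ))/log(1+Γ) + 1⌋. -/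
theorem stmt_5 (Γ δ2 Vmax : ℝ) (hΓ : 0 < Γ) (hδ : 0 < δ2) (hVmax : 0 < Vmax)
    (M : ℕ) (hM : 1 ≤ M) (V : ℕ → ℝ)
    (hV1 : V 1 ≥ Γ * δ2)
    (hVm : ∀ m : ℕ, 2 ≤ m → m ≤ M → V m ≥ Γ * ((∑ x ∈ Finset.Icc 1 (m - 1), V x) + δ2))
    (hVM : V M ≤ Vmax) :
    (1 + Γ) ^ (M - 1) ≤ Vmax / (δ2 * Γ) ∧
    (M : ℤ) ≤ ⌊Real.log (Vmax / (δ2 * Γ)) / Real.log (1 + Γ) + 1⌋ := by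
  have h1Γ : (1:ℝ) < 1 + Γ := by linarith
  -- sum lemma
  have hS : ∀ m : ℕ, 1 ≤ m → m ≤ M →
      δ2 * (1 + Γ) ^ m ≤ (∑ x ∈ Finset.Icc 1 m, V x) + δ2 := by
    intro m hm
    induction m, hm using Nat.le_induction with
    | base =>
      intro _
      simp only [Finset.Icc_self, Finset.sum_singleton, pow_one]
      linarith
    | succ n hn ih =>
      intro hnM
      have hnM' : n ≤ M := le_trans (Nat.le_succ n) hnM
      have ihn := ih hnM'
      have hV := hVm (n + 1) (by omega) hnM
      simp only [Nat.add_sub_cancel] at hV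
      have hsum : (∑ x ∈ Finset.Icc 1 (n + 1), V x)
          = (∑ x ∈ Finset.Icc 1 n, V x) + V (n + 1) := by
        rw [← Finset.sum_Icc_succ_top (by omega : 1 ≤ n + 1)]
      rw [hsum, pow_succ]
      nlinarith [pow_pos (lt_trans zero_lt_one h1Γ) n]
  have key : Γ * δ2 * (1 + Γ) ^ (M - 1) ≤ V M := by
    rcases Nat.lt_or_ge M 2 with h2 | h2
    · interval_cases M
      simpa using hV1
    · have hV := hVm M h2 le_rfl
      have hS' := hS (M - 1) (by omega) (by omega)
      nlinarith
  have hmain : Γ * δ2 * (1 + Γ) ^ (M - 1) ≤ Vmax := le_trans key hVM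
  have hδΓ : 0 < δ2 * Γ := mul_pos hδ hΓ
  have h1 : (1 + Γ) ^ (M - 1) ≤ Vmax / (δ2 * Γ) := by
    rw [le_div_iff₀ hδΓ]
    nlinarith
  refine ⟨h1, ?_⟩
  have hpow : (0:ℝ) < (1 + Γ) ^ (M - 1) := pow_pos (by linarith) _
  have hlog : Real.log ((1 + Γ) ^ (M - 1)) ≤ Real.log (Vmax / (δ2 * Γ)) :=
    Real.log_le_log hpow h1
  rw [Real.log_pow] at hlog
  have hlogpos : 0 < Real.log (1 + Γ) := Real.log_pos h1Γ
  have hcast : ((M - 1 : ℕ) : ℝ) = (M : ℝ) - 1 := by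
    push_cast [Nat.cast_sub hM]; ring
  rw [hcast] at hlog
  have h2 : (M : ℝ) - 1 ≤ Real.log (Vmax / (δ2 * Γ)) / Real.log (1 + Γ) := by
    rw [le_div_iff₀ hlogpos]
    linarith
  rw [Int.le_floor]
  push_cast
  linarith
end

section
/- Let Γ > 0, δ² > 0, and V_max ≥ δ²Γ be real numbers, define the natural number M = ⌊ log(V_max/(δ²Γ)) / log(1+Γ) + 1 ⌋, and for 1 ≤ m ≤ M set V_m = V_max/(1+Γ)^{M-m}. Then this sequence is feasible: V_1 ≥ Γδ², V_m ≥ Γ(∑_{x=1}^{m-1} V_x + δ²) for every 2 ≤ m ≤ M, the sequence is strictly increasing, and V_M = V_max. -/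
/-!
If every level is at least `1 + Γ` times the previous one, the SINR margin propagates: the new
interference `V n` costs `Γ * V n`, which the growth from `V n` to `V (n + 1)` pays for. So the
geometric design is feasible as soon as `V 1 = V_max / (1 + Γ) ^ (M - 1) ≥ Γ δ²`, and this is
exactly what taking `M - 1` to be the floor of `log_{1+Γ} (V_max / (δ² Γ))` guarantees.
-/

open Finset Real

theorem mul_sum_Icc_add_le_of_one_add_mul_le_succ {Γ δ2 : ℝ} {V : ℕ → ℝ} {M : ℕ}
    (h₁ : Γ * δ2 ≤ V 1) (hstep : ∀ n, 1 ≤ n → n < M → (1 + Γ) * V n ≤ V (n + 1)) :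
    ∀ m, 1 ≤ m → m ≤ M → Γ * ((∑ x ∈ Icc 1 (m - 1), V x) + δ2) ≤ V m := by
  intro m hm
  induction m, hm using Nat.le_induction with
  | base => intro; simpa using h₁
  | succ n hn ih =>
    intro hnM
    have hsum : ∑ x ∈ Icc 1 (n + 1 - 1), V x = (∑ x ∈ Icc 1 (n - 1), V x) + V n := by
      obtain ⟨k, rfl⟩ := Nat.exists_eq_add_of_le' hn
      simp [sum_Icc_succ_top]
    have ih := ih (Nat.le_of_succ_le hnM)
    have := hstep n hn hnM
    rw [hsum]
    linarith

theorem pow_le_of_natCast_le_log_div_log {t R : ℝ} {n : ℕ} (ht : 1 < t) (hR : 0 < R)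
    (hn : (n : ℝ) ≤ log R / log t) : t ^ n ≤ R := by
  rw [log_div_log, le_logb_iff_rpow_le ht hR, rpow_natCast] at hn
  exact hn

theorem eq_natFloor_add_one_of_intCast_eq_floor_add_one {x : ℝ} {M : ℕ} (hx : 0 ≤ x)
    (hM : (M : ℤ) = ⌊x + 1⌋) : M = ⌊x⌋₊ + 1 := by
  rw [Int.floor_add_one, ← Int.natCast_floor_eq_floor hx] at hM
  exact_mod_cast hM

theorem mul_div_pow_sub_of_lt {t c : ℝ} (ht : t ≠ 0) {n M : ℕ} (hn : n < M) :
    t * (c / t ^ (M - n)) = c / t ^ (M - (n + 1)) := by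
  rw [show M - n = M - (n + 1) + 1 by omega, pow_succ]
  field_simp

/-- Achievability: with M = ⌊log(V_max/(δ²Γ))/log(1+Γ) + 1⌋ and the geometric design
V_m = V_max/(1+Γ)^{M-m}, the power levels are SIC-feasible, strictly increasing,
and the top level equals V_max. -/
theorem stmt_6 (Γ δ2 Vmax : ℝ) (hΓ : 0 < Γ) (hδ : 0 < δ2) (hVmax : δ2 * Γ ≤ Vmax)
    (M : ℕ) (hM : (M : ℤ) = ⌊Real.log (Vmax / (δ2 * Γ)) / Real.log (1 + Γ) + 1⌋)
    (V : ℕ → ℝ)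
    (hV : ∀ m : ℕ, 1 ≤ m → m ≤ M → V m = Vmax / (1 + Γ) ^ (M - m)) :
    V 1 ≥ Γ * δ2 ∧
    (∀ m : ℕ, 2 ≤ m → m ≤ M → V m ≥ Γ * ((∑ x ∈ Finset.Icc 1 (m - 1), V x) + δ2)) ∧
    (∀ m : ℕ, 2 ≤ m → m ≤ M → V (m - 1) < V m) ∧
    V M = Vmax := by
  have hδΓ : 0 < δ2 * Γ := mul_pos hδ hΓ
  have hratio : 1 ≤ Vmax / (δ2 * Γ) := (one_le_div hδΓ).mpr hVmax
  have hL : 0 ≤ log (Vmax / (δ2 * Γ)) / log (1 + Γ) :=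
    div_nonneg (log_nonneg hratio) (log_nonneg (by linarith))
  have hM1 := eq_natFloor_add_one_of_intCast_eq_floor_add_one hL hM
  have hpow : (1 + Γ) ^ (M - 1) ≤ Vmax / (δ2 * Γ) :=
    pow_le_of_natCast_le_log_div_log (by linarith) (by linarith)
      (by rw [hM1, Nat.add_sub_cancel]; exact Nat.floor_le hL)
  have hV1 : Γ * δ2 ≤ V 1 := by
    rw [hV 1 le_rfl (by omega), le_div_iff₀ (by positivity), mul_comm Γ]
    exact (le_div_iff₀' hδΓ).mp hpow
  have hstep : ∀ n, 1 ≤ n → n < M → (1 + Γ) * V n = V (n + 1) := fun n hn hnM => by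
    rw [hV n hn hnM.le, hV (n + 1) (by omega) hnM, mul_div_pow_sub_of_lt (by linarith) hnM]
  refine ⟨hV1, fun m hm hmM => ?_, fun m hm hmM => ?_, ?_⟩
  · exact mul_sum_Icc_add_le_of_one_add_mul_le_succ hV1 (fun n hn hnM => (hstep n hn hnM).le)
      m (by omega) hmM
  · obtain ⟨n, rfl⟩ : ∃ n, m = n + 1 := ⟨m - 1, by omega⟩
    have hVn : 0 < V n := by
      rw [hV n (by omega) (by omega)]
      exact div_pos (by linarith) (by positivity)
    rw [Nat.add_sub_cancel, ← hstep n (by omega) hmM]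
    exact lt_mul_of_one_lt_left hVn (by linarith)
  · rw [hV M (by omega) le_rfl, Nat.sub_self, pow_zero, div_one]
end

section
/- Let Γ > 0, δ² > 0, and V_max ≥ δ²Γ be real numbers. Then the greatest natural number M for which there exist real numbers V_1 < V_2 < … < V_M ≤ V_max satisfying V_1 ≥ Γδ² and V_m ≥ Γ(∑_{x=1}^{m-1} V_x + δ²) for every 2 ≤ m ≤ M equals ⌊ log(V_max/(δ²Γ)) / log(1+Γ) + 1 ⌋. (Proposition 1: the maximum number of NOMA power levels under a maximum received power constraint.) -/
lemma geom_aux (Γ : ℝ) : ∀ n : ℕ, (∑ x ∈ Finset.Icc 1 n, (1+Γ)^(x-1) * Γ) = (1+Γ)^n - 1 := by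
  intro n
  induction n with
  | zero => simp
  | succ n ih =>
    rw [Finset.sum_Icc_succ_top (by omega : 1 ≤ n+1), ih]
    have : n + 1 - 1 = n := by omega
    rw [this, pow_succ]
    ring

/-- Proposition 1: the maximum number of NOMA power levels under the maximum received
power constraint V_max is M = ⌊log(V_max/(δ²Γ))/log(1+Γ) + 1⌋. -/
theorem stmt_7 (Γ δ2 Vmax : ℝ) (hΓ : 0 < Γ) (hδ : 0 < δ2) (hVmax : δ2 * Γ ≤ Vmax)
    (M : ℕ) (hM : (M : ℤ) = ⌊Real.log (Vmax / (δ2 * Γ)) / Real.log (1 + Γ) + 1⌋) :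
    IsGreatest {K : ℕ | ∃ V : ℕ → ℝ,
      (∀ m k : ℕ, 1 ≤ m → m < k → k ≤ K → V m < V k) ∧
      V K ≤ Vmax ∧
      V 1 ≥ Γ * δ2 ∧
      (∀ m : ℕ, 2 ≤ m → m ≤ K → V m ≥ Γ * ((∑ x ∈ Finset.Icc 1 (m - 1), V x) + δ2))} M := by
  have ha : (1:ℝ) < 1 + Γ := by linarith
  have ha0 : (0:ℝ) < 1 + Γ := by linarith
  have hla : 0 < Real.log (1+Γ) := Real.log_pos ha
  have hδΓ : 0 < δ2 * Γ := mul_pos hδ hΓ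
  have hq : (1:ℝ) ≤ Vmax / (δ2*Γ) := (one_le_div hδΓ).2 hVmax
  set L := Real.log (Vmax/(δ2*Γ)) / Real.log (1+Γ) with hL
  have hL0 : 0 ≤ L := div_nonneg (Real.log_nonneg hq) hla.le
  have hM1 : 1 ≤ M := by
    have h1 : (1:ℤ) ≤ ⌊L + 1⌋ := by
      rw [Int.le_floor]; push_cast; linarith
    rw [← hM] at h1; exact_mod_cast h1
  have key : ∀ n : ℕ, (Γ * δ2 * (1+Γ)^n ≤ Vmax ↔ (n:ℝ) ≤ L) := by
    intro n
    have h1 : (0:ℝ) < (1+Γ)^n := pow_pos ha0 n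
    have e : Γ * δ2 * (1+Γ)^n = (1+Γ)^n * (δ2*Γ) := by ring
    rw [e, ← le_div_iff₀ hδΓ, hL, le_div_iff₀ hla, ← Real.log_pow,
        Real.log_le_log_iff h1 (lt_of_lt_of_le one_pos hq)]
  constructor
  · -- membership
    refine ⟨fun m => Γ * δ2 * (1+Γ)^(m-1), ?_, ?_, ?_, ?_⟩
    · intro m k h1 hmk hkM
      have h : (1+Γ)^(m-1) < (1+Γ)^(k-1) :=
        pow_lt_pow_right₀ ha (by omega)
      show Γ * δ2 * (1+Γ)^(m-1) < Γ * δ2 * (1+Γ)^(k-1)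
      nlinarith
    · rw [key]
      have hfl : (M:ℝ) ≤ L + 1 := by
        have := Int.floor_le (L + 1)
        rw [← hM] at this; exact_mod_cast this
      have : ((M - 1 : ℕ) : ℝ) = (M:ℝ) - 1 := by
        push_cast [Nat.cast_sub hM1]; ring
      rw [this]; linarith
    · simp
    · intro m h2 hmM
      have hs : ∑ x ∈ Finset.Icc 1 (m-1), Γ * δ2 * (1+Γ)^(x-1)
          = δ2 * ((1+Γ)^(m-1) - 1) := by
        rw [← geom_aux Γ (m-1), Finset.mul_sum]
        exact Finset.sum_congr rfl (fun x _ => by ring)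
      rw [hs]
      show Γ * δ2 * (1+Γ)^(m-1) ≥ Γ * (δ2 * ((1+Γ)^(m-1) - 1) + δ2)
      exact ge_of_eq (by ring)
  · -- upper bound
    intro K hK
    obtain ⟨V, hmono, hVK, hV1, hrec⟩ := hK
    rcases Nat.eq_zero_or_pos K with h0 | hK1
    · omega
    have lower : ∀ m, 1 ≤ m → m ≤ K → Γ*δ2*(1+Γ)^(m-1) ≤ V m := by
      intro m
      induction m using Nat.strong_induction_on with
      | _ m ih =>
        intro h1 hK'
        rcases eq_or_lt_of_le h1 with h | h
        · rw [← h]; simpa using hV1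
        · have h2 : 2 ≤ m := h
          have hVm := hrec m h2 hK'
          have hsum : δ2 * ((1+Γ)^(m-1) - 1) ≤ ∑ x ∈ Finset.Icc 1 (m-1), V x := by
            have hs : ∑ x ∈ Finset.Icc 1 (m-1), Γ * δ2 * (1+Γ)^(x-1)
                = δ2 * ((1+Γ)^(m-1) - 1) := by
              rw [← geom_aux Γ (m-1), Finset.mul_sum]
              exact Finset.sum_congr rfl (fun x _ => by ring)
            rw [← hs]
            refine Finset.sum_le_sum (fun x hx => ?_)
            rw [Finset.mem_Icc] at hx
            exact ih x (by omega) hx.1 (by omega)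
          have hp : (1+Γ)^(m-1) = (1+Γ)^(m-2) * (1+Γ) := by
            rw [← pow_succ]; congr 1; omega
          nlinarith
    have hKV : Γ*δ2*(1+Γ)^(K-1) ≤ Vmax := le_trans (lower K hK1 le_rfl) hVK
    rw [key] at hKV
    have hcast : ((K - 1 : ℕ) : ℝ) = (K:ℝ) - 1 := by
      push_cast [Nat.cast_sub hK1]; ring
    rw [hcast] at hKV
    have : (K : ℤ) ≤ ⌊L + 1⌋ := by
      rw [Int.le_floor]; push_cast; linarith
    rw [← hM] at this; exact_mod_cast this
end

section
/- Let Γ > 0 and δ² > 0 be real numbers, and for x ≥ 1 set V_x = δ²·Γ·(1+Γ)^{x-1} (the tight geometric power-level design). Fix a level m ≥ 1, and suppose that for each level x < m there are k_x ≥ 0 devices transmitting at received power V_x, while all signals at levels ≥ m other than the considered signal have been decoded and cancelled. Then the considered signal at level m satisfies the decoding condition V_m / (∑_{x=1}^{m-1} k_x·V_x + δ²) ≥ Γ if and only if ∑_{x=1}^{m-1} k_x·V_x ≤ ∑_{x=1}^{m-1} V_x. -/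
/-- For the tight geometric design V_x = δ²Γ(1+Γ)^{x-1}, a signal at level m with k_x
interfering devices at each lower level x < m is decodable iff the total interference
does not exceed ∑_{x<m} V_x. -/
theorem stmt_10 (Γ δ2 : ℝ) (hΓ : 0 < Γ) (hδ : 0 < δ2) (V : ℕ → ℝ)
    (hV : ∀ x : ℕ, 1 ≤ x → V x = δ2 * Γ * (1 + Γ) ^ (x - 1))
    (k : ℕ → ℕ) (m : ℕ) (hm : 1 ≤ m) :
    V m / ((∑ x ∈ Finset.Icc 1 (m - 1), (k x : ℝ) * V x) + δ2) ≥ Γ ↔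
      ∑ x ∈ Finset.Icc 1 (m - 1), (k x : ℝ) * V x ≤ ∑ x ∈ Finset.Icc 1 (m - 1), V x := by
  set n := m - 1 with hn
  have hmn : m = n + 1 := (Nat.succ_pred_eq_of_pos hm).symm
  have hVpos : ∀ x ∈ Finset.Icc 1 n, 0 < V x := by
    intro x hx
    rw [hV x (Finset.mem_Icc.mp hx).1]
    positivity
  have hS : 0 ≤ ∑ x ∈ Finset.Icc 1 n, (k x : ℝ) * V x := by
    apply Finset.sum_nonneg
    intro x hx
    exact mul_nonneg (Nat.cast_nonneg _) (hVpos x hx).le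
  set S := ∑ x ∈ Finset.Icc 1 n, (k x : ℝ) * V x with hSdef
  have hden : 0 < S + δ2 := by linarith
  -- sum of V over Icc 1 n
  have hsum : ∑ x ∈ Finset.Icc 1 n, V x = δ2 * ((1 + Γ) ^ n - 1) := by
    clear hSdef hS hden hmn hn
    induction n with
    | zero => simp
    | succ p ih =>
      rw [Finset.sum_Icc_succ_top (by omega), ih, hV (p + 1) (by omega)]
      simp only [Nat.add_sub_cancel]
      ring
  have hVm : V m = δ2 * Γ * (1 + Γ) ^ n := by
    rw [hV m hm, hn]
  rw [ge_iff_le, le_div_iff₀ hden, hVm, hsum]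
  constructor
  · intro h
    nlinarith
  · intro h
    nlinarith
end
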